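/- Let n ≥ 3 be an integer and let ũ ∈ C²([0,∞)) satisfy the limit ODE ũ''(ρ) + ((n+1)/ρ)ũ'(ρ) + 2n·ũ(ρ)² + 2ρ·ũ(ρ)ũ'(ρ) = 0 for ρ > 0, with ũ(0) = 1 and ũ'(0) = 0, and assume that ũ(ρ) > 0 and ρ²·ũ(ρ) ≤ 2 for every ρ ≥ 0 and that sup_{ρ ≥ 0} ρ³·|ũ'(ρ)| < ∞. Then lim_{ρ→∞} ρ²·ũ(ρ) = 1 and lim_{ρ→∞} ρ³·ũ'(ρ) = −2. -/

import Mathlib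

open Set Filter
open Topology intervalIntegral

set_option maxHeartbeats 1000000

noncomputable section



private lemma cesaro {j : ℕ} {f : ℝ → ℝ} (hf : ContinuousOn f (Ici 0))
    {C : ℝ} (hC : ∀ t : ℝ, 0 ≤ t → |f t| ≤ C) {L : ℝ}
    (hL : Tendsto f atTop (𝓝 L)) :
    Tendsto (fun ρ : ℝ => ((j:ℝ)+1) * (∫ t in (0:ℝ)..ρ, t ^ j * f t) / ρ ^ (j+1))
      atTop (𝓝 L) := by
  have hC0 : 0 ≤ C := le_trans (abs_nonneg _) (hC 0 le_rfl)
  have hcont : ContinuousOn (fun t : ℝ => t ^ j * (f t - L)) (Ici 0) :=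
    (continuousOn_pow j).mul (hf.sub continuousOn_const)
  have hint : ∀ {a b : ℝ}, 0 ≤ a → 0 ≤ b →
      IntervalIntegrable (fun t : ℝ => t ^ j * (f t - L)) MeasureTheory.volume a b := by
    intro a b ha hb
    apply (hcont.mono _).intervalIntegrable
    intro t ht
    rcases le_total a b with h | h
    · rw [uIcc_of_le h] at ht; exact le_trans ha ht.1
    · rw [uIcc_of_ge h] at ht; exact le_trans hb ht.1
  rw [Metric.tendsto_atTop]
  intro ε hε
  obtain ⟨R0, hR0⟩ := (Metric.tendsto_atTop.mp hL) (ε/4) (by positivity)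
  set R : ℝ := max R0 1 with hRdef
  have hR1 : (1:ℝ) ≤ R := le_max_right _ _
  have hR0' : (0:ℝ) ≤ R := by linarith
  set B : ℝ := ((j:ℝ)+1) * ((C + |L|) * R ^ j * R) with hBdef
  have hB0 : 0 ≤ B := by positivity
  refine ⟨max R (4*B/ε + 1), fun ρ hρ => ?_⟩
  have hρR : R ≤ ρ := le_trans (le_max_left _ _) hρ
  have hρ1 : (1:ℝ) ≤ ρ := le_trans hR1 hρR
  have hρ0 : (0:ℝ) < ρ := by linarith
  have hρB : 4*B/ε + 1 ≤ ρ := le_trans (le_max_right _ _) hρ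
  -- rewrite the difference as an integral of t^j * (f t - L)
  have hsplit : (∫ t in (0:ℝ)..ρ, t ^ j * (f t - L))
      = (∫ t in (0:ℝ)..R, t ^ j * (f t - L)) + ∫ t in R..ρ, t ^ j * (f t - L) :=
    (integral_add_adjacent_intervals (hint le_rfl hR0') (hint hR0' hρ0.le)).symm
  have hIL : (∫ t in (0:ℝ)..ρ, t ^ j * L) = L * ρ ^ (j+1) / ((j:ℝ)+1) := by
    have : (∫ t in (0:ℝ)..ρ, t ^ j * L) = (∫ t in (0:ℝ)..ρ, t ^ j) * L := by
      rw [← intervalIntegral.integral_mul_const]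
    rw [this, integral_pow]
    push_cast
    ring
  have hfint : IntervalIntegrable (fun t : ℝ => t ^ j * f t) MeasureTheory.volume 0 ρ := by
    apply (((continuousOn_pow j).mul hf).mono _).intervalIntegrable
    intro t ht
    rw [uIcc_of_le hρ0.le] at ht; exact ht.1
  have hLint : IntervalIntegrable (fun t : ℝ => t ^ j * L) MeasureTheory.volume 0 ρ :=
    ((continuous_pow j).mul continuous_const).intervalIntegrable _ _
  have hIdiff : (∫ t in (0:ℝ)..ρ, t ^ j * (f t - L))
      = (∫ t in (0:ℝ)..ρ, t ^ j * f t) - L * ρ ^ (j+1) / ((j:ℝ)+1) := by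
    rw [← hIL, ← intervalIntegral.integral_sub hfint hLint]
    apply intervalIntegral.integral_congr
    intro t _
    simp only []
    ring
  -- bound the near part
  have hnear : |∫ t in (0:ℝ)..R, t ^ j * (f t - L)| ≤ (C + |L|) * R ^ j * R := by
    have := intervalIntegral.norm_integral_le_of_norm_le_const
      (C := (C + |L|) * R ^ j) (f := fun t : ℝ => t ^ j * (f t - L)) (a := 0) (b := R) ?_
    · rw [Real.norm_eq_abs] at this
      simpa [abs_of_nonneg hR0'] using this
    · intro t ht
      rw [uIoc_of_le hR0'] at ht
      have ht0 : 0 ≤ t := ht.1.le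
      have htR : t ≤ R := ht.2
      rw [Real.norm_eq_abs, abs_mul]
      have h1 : |t ^ j| ≤ R ^ j := by
        rw [abs_pow, abs_of_nonneg ht0]
        exact pow_le_pow_left₀ ht0 htR j
      have h2 : |f t - L| ≤ C + |L| := le_trans (abs_sub _ _) (by
        have := hC t ht0; linarith)
      calc |t ^ j| * |f t - L| ≤ R ^ j * (C + |L|) :=
            mul_le_mul h1 h2 (abs_nonneg _) (by positivity)
        _ = (C + |L|) * R ^ j := by ring
  -- bound the far part
  have hfar : |∫ t in R..ρ, t ^ j * (f t - L)| ≤ ε/4 * ρ ^ (j+1) / ((j:ℝ)+1) := by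
    have habs : |∫ t in R..ρ, t ^ j * (f t - L)| ≤ ∫ t in R..ρ, |t ^ j * (f t - L)| :=
      intervalIntegral.abs_integral_le_integral_abs hρR
    have hmono : (∫ t in R..ρ, |t ^ j * (f t - L)|) ≤ ∫ t in R..ρ, ε/4 * t ^ j := by
      apply intervalIntegral.integral_mono_on hρR ((hint hR0' hρ0.le).abs)
        ((continuous_const.mul (continuous_pow j)).intervalIntegrable _ _)
      · intro t ht
        have ht0 : 0 ≤ t := le_trans hR0' ht.1
        rw [abs_mul, abs_pow, abs_of_nonneg ht0]
        have : |f t - L| ≤ ε/4 := by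
          have := hR0 t (le_trans (le_max_left _ _) ht.1)
          rw [Real.dist_eq] at this
          linarith
        calc t ^ j * |f t - L| ≤ t ^ j * (ε/4) := by
              apply mul_le_mul_of_nonneg_left this (by positivity)
          _ = ε/4 * t ^ j := by ring
    have hval : (∫ t in R..ρ, ε/4 * t ^ j) = ε/4 * ((ρ ^ (j+1) - R ^ (j+1)) / ((j:ℝ)+1)) := by
      rw [intervalIntegral.integral_const_mul, integral_pow]
      try push_cast
      try ring
    have hRρ : R ^ (j+1) ≤ ρ ^ (j+1) := pow_le_pow_left₀ hR0' hρR _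
    have hfin : ε/4 * ((ρ ^ (j+1) - R ^ (j+1)) / ((j:ℝ)+1)) ≤ ε/4 * ρ ^ (j+1) / ((j:ℝ)+1) := by
      rw [mul_div_assoc]
      apply mul_le_mul_of_nonneg_left _ (by positivity)
      apply div_le_div_of_nonneg_right _ (by positivity)
      · nlinarith [pow_nonneg hR0' (j+1)]
    linarith
  -- combine
  have hρpow : (0:ℝ) < ρ ^ (j+1) := by positivity
  rw [Real.dist_eq]
  have hform : ((j:ℝ)+1) * (∫ t in (0:ℝ)..ρ, t ^ j * f t) / ρ ^ (j+1) - L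
      = ((j:ℝ)+1) / ρ ^ (j+1) * (∫ t in (0:ℝ)..ρ, t ^ j * (f t - L)) := by
    rw [hIdiff]
    field_simp
  rw [hform, hsplit]
  have hb1 : |((j:ℝ)+1) / ρ ^ (j+1)| = ((j:ℝ)+1) / ρ ^ (j+1) := by
    rw [abs_of_pos (by positivity)]
  calc |((j:ℝ)+1) / ρ ^ (j+1) * ((∫ t in (0:ℝ)..R, t ^ j * (f t - L)) + ∫ t in R..ρ, t ^ j * (f t - L))|
      ≤ ((j:ℝ)+1) / ρ ^ (j+1) * ((C + |L|) * R ^ j * R + ε/4 * ρ ^ (j+1) / ((j:ℝ)+1)) := by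
        rw [abs_mul, hb1]
        apply mul_le_mul_of_nonneg_left _ (by positivity)
        exact le_trans (abs_add_le _ _) (by linarith)
    _ = B / ρ ^ (j+1) + ε/4 := by
        rw [hBdef]; field_simp
    _ < ε := by
        have h1 : B / ρ ^ (j+1) ≤ B / ρ := by
          apply div_le_div_of_nonneg_left hB0 hρ0
          exact le_self_pow₀ hρ1 (Nat.succ_ne_zero j)
        have h2 : B / ρ < ε/2 := by
          rw [div_lt_iff₀ hρ0]
          have e1 : ε * (4*B/ε + 1) ≤ ε * ρ := mul_le_mul_of_nonneg_left hρB (le_of_lt hε)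
          have e2 : ε * (4*B/ε) = 4*B := by field_simp
          nlinarith
        linarith

private lemma drop_lemma {V V' : ℝ → ℝ} {a b c : ℝ} (ha : 0 < a) (hab : a ≤ b)
    (hc : 0 ≤ c)
    (hd : ∀ ρ ∈ Icc a b, HasDerivAt V (V' ρ) ρ)
    (hle : ∀ ρ ∈ Icc a b, V' ρ ≤ -c / ρ) :
    V b ≤ V a - c * (b - a) / b := by
  have hb : 0 < b := lt_of_lt_of_le ha hab
  set W : ℝ → ℝ := fun ρ => V ρ + (c / b) * ρ with hW
  have hWd : ∀ ρ ∈ Icc a b, HasDerivAt W (V' ρ + c / b) ρ := by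
    intro ρ hρ
    have h2 : HasDerivAt (fun ρ : ℝ => (c / b) * ρ) (c / b) ρ := by
      simpa using (hasDerivAt_id ρ).const_mul (c / b)
    exact (hd ρ hρ).add h2
  have hanti : AntitoneOn W (Icc a b) := by
    apply antitoneOn_of_deriv_nonpos (convex_Icc a b)
    · intro ρ hρ
      exact ((hWd ρ hρ).continuousAt).continuousWithinAt
    · intro ρ hρ
      rw [interior_Icc] at hρ
      exact ((hWd ρ (Ioo_subset_Icc_self hρ)).differentiableAt).differentiableWithinAt
    · intro ρ hρ
      rw [interior_Icc] at hρ
      rw [(hWd ρ (Ioo_subset_Icc_self hρ)).deriv]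
      have hρ0 : 0 < ρ := lt_trans ha hρ.1
      have h1 : V' ρ ≤ -c / ρ := hle ρ (Ioo_subset_Icc_self hρ)
      have h2 : c / b ≤ c / ρ := div_le_div_of_nonneg_left hc hρ0 hρ.2.le
      have h3 : -c / ρ = -(c / ρ) := by ring
      linarith [h3 ▸ h1]
  have hkey := hanti (left_mem_Icc.mpr hab) (right_mem_Icc.mpr hab) hab
  simp only [hW] at hkey
  have e1 : (c / b) * b = c := by field_simp
  have e2 : c * (b - a) / b = c - (c / b) * a := by field_simp
  linarith

private lemma phi_lip {k x y : ℝ} (hk : 1 ≤ k) (hx0 : 0 ≤ x) (hx2 : x ≤ 2)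
    (hy0 : 0 ≤ y) (hy2 : y ≤ 2) :
    |x*(x-1)^2*(x+k-1) - y*(y-1)^2*(y+k-1)| ≤ (81 + 21*k) * |x-y| := by
  have key : x*(x-1)^2*(x+k-1) - y*(y-1)^2*(y+k-1)
      = (x - y) * (x^3+x^2*y+x*y^2+y^3 + (k-3)*(x^2+x*y+y^2) + (3-2*k)*(x+y) + (k-1)) := by
    ring
  rw [key, abs_mul, mul_comm]
  apply mul_le_mul_of_nonneg_right _ (abs_nonneg _)
  have hS0 : 0 ≤ x^2+x*y+y^2 := by positivity
  have hS12 : x^2+x*y+y^2 ≤ 12 := by nlinarith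
  have hc0 : 0 ≤ x^3+x^2*y+x*y^2+y^3 := by positivity
  have hc32 : x^3+x^2*y+x*y^2+y^3 ≤ 32 := by nlinarith
  have e1 : 0 ≤ (k-1)*(12 - (x^2+x*y+y^2)) := mul_nonneg (by linarith) (by linarith)
  have e1' : 0 ≤ (k-1)*(x^2+x*y+y^2) := mul_nonneg (by linarith) hS0
  have e2 : 0 ≤ k*(x+y) := mul_nonneg (by linarith) (by linarith)
  have e5 : k*(x+y) ≤ 4*k := by nlinarith
  rw [abs_le]
  constructor
  · nlinarith
  · nlinarith

private lemma main_dyn {k M : ℝ} (hk : 1 ≤ k) (hM : 0 ≤ M) {g q : ℝ → ℝ}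
    (hg0 : ∀ ρ : ℝ, 0 < ρ → 0 < g ρ) (hg2 : ∀ ρ : ℝ, 0 < ρ → g ρ ≤ 2)
    (hq : ∀ ρ : ℝ, 0 < ρ → |q ρ| ≤ M)
    (hgd : ∀ ρ : ℝ, 0 < ρ → HasDerivAt g ((2*g ρ + q ρ)/ρ) ρ)
    (hqd : ∀ ρ : ℝ, 0 < ρ →
      HasDerivAt q ((-(k*q ρ) - 2*(k+2)*(g ρ)^2 - 2*g ρ*q ρ)/ρ) ρ)
    (hg00 : Tendsto g (𝓝[>] (0:ℝ)) (𝓝 0)) (hq00 : Tendsto q (𝓝[>] (0:ℝ)) (𝓝 0))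
    (hqlim0 : Tendsto g atTop (𝓝 0) → Tendsto q atTop (𝓝 0)) :
    Tendsto g atTop (𝓝 1) := by
  set φ : ℝ → ℝ := fun x => x*(x-1)^2*(x+k-1) with hφdef
  set P : ℝ → ℝ := fun x => k*g x + q x + (g x)^2 - (k-1) with hPdef
  set V : ℝ → ℝ := fun x => (P x)^2/2 + (k/3)*(2*(g x)^3 - 3*(g x)^2) with hVdef
  -- derivative of V
  have hVd : ∀ ρ : ℝ, 0 < ρ → HasDerivAt V (-(2*k*φ (g ρ))/ρ) ρ := by
    intro ρ hρ
    have hρ0 : ρ ≠ 0 := ne_of_gt hρ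
    have hg' := hgd ρ hρ
    have hq' := hqd ρ hρ
    have hP : HasDerivAt P
        (k*((2*g ρ + q ρ)/ρ) + (-(k*q ρ) - 2*(k+2)*(g ρ)^2 - 2*g ρ*q ρ)/ρ
          + 2*(g ρ)^1*((2*g ρ + q ρ)/ρ)) ρ := by
      exact (((hg'.const_mul k).add hq').add (hg'.pow 2)).sub_const (k-1)
    have hV := ((hP.pow 2).div_const 2).add
      ((((hg'.pow 3).const_mul 2).sub ((hg'.pow 2).const_mul 3)).const_mul (k/3))
    refine hV.congr_deriv ?_
    simp only [hPdef, hφdef]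
    push_cast
    field_simp
    ring
  have hVanti : AntitoneOn V (Ioi 0) := by
    apply antitoneOn_of_deriv_nonpos (convex_Ioi 0)
    · intro ρ hρ; exact (hVd ρ hρ).continuousAt.continuousWithinAt
    · intro ρ hρ; rw [interior_Ioi] at hρ
      exact (hVd ρ hρ).differentiableAt.differentiableWithinAt
    · intro ρ hρ
      rw [interior_Ioi] at hρ
      rw [(hVd ρ hρ).deriv]
      have h2 := hg0 ρ hρ
      have h3 : 0 ≤ g ρ + k - 1 := by linarith
      have h1 : 0 ≤ φ (g ρ) := by
        simp only [hφdef]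
        have := sq_nonneg (g ρ - 1)
        positivity
      apply div_nonpos_of_nonpos_of_nonneg _ (le_of_lt hρ)
      nlinarith
  have hφnn : ∀ ρ : ℝ, 0 < ρ → 0 ≤ φ (g ρ) := by
    intro ρ hρ
    have h2 := hg0 ρ hρ
    have h3 : 0 ≤ g ρ + k - 1 := by linarith
    simp only [hφdef]
    have := sq_nonneg (g ρ - 1)
    positivity
  have hVlb : ∀ ρ : ℝ, 0 < ρ → -(k/3) ≤ V ρ := by
    intro ρ hρ
    have h2 := hg0 ρ hρ
    simp only [hVdef]
    nlinarith [sq_nonneg (P ρ), mul_nonneg (sq_nonneg (g ρ - 1)) (by linarith : (0:ℝ) ≤ 2*g ρ + 1)]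
  -- Barbalat-type statement
  have hφ0 : Tendsto (fun ρ => φ (g ρ)) atTop (𝓝 0) := by
    by_contra hcon
    rw [Metric.tendsto_atTop] at hcon
    push_neg at hcon
    obtain ⟨ε, hε, hfreq⟩ := hcon
    choose F hF1 hF2 using hfreq
    set K : ℝ := 81 + 21*k with hKdef
    have hK0 : (0:ℝ) < K := by simp only [hKdef]; linarith
    set C1 : ℝ := 4 + M with hC1def
    have hC10 : (0:ℝ) < C1 := by simp only [hC1def]; linarith
    set δ : ℝ := ε/(2*K*C1) with hδdef
    have hδ0 : (0:ℝ) < δ := by positivity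
    set Δ : ℝ := k*ε*δ/(1+δ) with hΔdef
    have hΔ0 : (0:ℝ) < Δ := by positivity
    -- single-step drop
    have hstep : ∀ a : ℝ, 1 ≤ a → ε ≤ φ (g a) → V ((1+δ)*a) ≤ V a - Δ := by
      intro a ha hφa
      have ha0 : (0:ℝ) < a := by linarith
      set b : ℝ := (1+δ)*a with hbdef
      have hab : a ≤ b := by nlinarith
      have hb0 : (0:ℝ) < b := by nlinarith
      -- variation bound for g on [a,b]
      have hvar : ∀ ρ ∈ Icc a b, |g ρ - g a| ≤ C1/a * (ρ - a) := by
        intro ρ hρ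
        have key := Convex.norm_image_sub_le_of_norm_hasDerivWithin_le
          (f := g) (f' := fun x => (2*g x + q x)/x) (s := Icc a b) (C := C1/a)
          (fun x hx => (hgd x (lt_of_lt_of_le ha0 hx.1)).hasDerivWithinAt)
          (fun x hx => by
            have hx0 : (0:ℝ) < x := lt_of_lt_of_le ha0 hx.1
            have h2 := hg0 x hx0
            have h3 := hg2 x hx0
            have h4 := hq x hx0
            rw [Real.norm_eq_abs, abs_div, abs_of_pos hx0]
            apply div_le_div₀ (le_of_lt hC10) _ ha0 hx.1
            calc |2*g x + q x| ≤ |2*g x| + |q x| := abs_add_le _ _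
              _ ≤ 4 + M := by
                  rw [abs_of_pos (by linarith : (0:ℝ) < 2*g x)]
                  linarith
              _ = C1 := by rw [hC1def])
          (convex_Icc a b) (left_mem_Icc.mpr hab) hρ
        rw [Real.norm_eq_abs, Real.norm_eq_abs,
          abs_of_nonneg (by linarith [hρ.1] : (0:ℝ) ≤ ρ - a)] at key
        exact key
      -- φ∘g stays above ε/2 on [a,b]
      have hφlow : ∀ ρ ∈ Icc a b, ε/2 ≤ φ (g ρ) := by
        intro ρ hρ
        have hρ0 : (0:ℝ) < ρ := lt_of_lt_of_le ha0 hρ.1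
        have hlip := phi_lip hk (le_of_lt (hg0 ρ hρ0)) (hg2 ρ hρ0)
          (le_of_lt (hg0 a ha0)) (hg2 a ha0)
        have h5 : |g ρ - g a| ≤ C1/a * (ρ - a) := hvar ρ hρ
        have h6 : ρ - a ≤ δ*a := by
          have h6' := hρ.2; simp only [hbdef] at h6'; nlinarith
        have h7 : C1/a * (ρ - a) ≤ C1*δ := by
          rw [div_mul_eq_mul_div, div_le_iff₀ ha0]
          nlinarith [mul_le_mul_of_nonneg_left h6 (le_of_lt hC10)]
        have h9 : K*(C1*δ) = ε/2 := by
          simp only [hδdef]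
          field_simp
        have h10 : |φ (g ρ) - φ (g a)| ≤ ε/2 := by
          simp only [hφdef]
          calc |g ρ*(g ρ-1)^2*(g ρ+k-1) - g a*(g a-1)^2*(g a+k-1)|
              ≤ (81+21*k) * |g ρ - g a| := hlip
            _ = K * |g ρ - g a| := by rw [hKdef]
            _ ≤ K*(C1*δ) := by
                apply mul_le_mul_of_nonneg_left (le_trans h5 h7) (le_of_lt hK0)
            _ = ε/2 := h9
        have h11 := abs_le.mp h10
        linarith [h11.1]
      -- apply the drop lemma
      have hdrop := drop_lemma (V := V) (V' := fun ρ => -(2*k*φ (g ρ))/ρ) ha0 hab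
        (by positivity : (0:ℝ) ≤ k*ε)
        (fun ρ hρ => hVd ρ (lt_of_lt_of_le ha0 hρ.1))
        (fun ρ hρ => by
          have hρ0 : (0:ℝ) < ρ := lt_of_lt_of_le ha0 hρ.1
          have h12 := hφlow ρ hρ
          have h13 : -(2*k*φ (g ρ)) ≤ -(k*ε) := by nlinarith
          exact div_le_div_of_nonneg_right h13 (le_of_lt hρ0))
      have h14 : k*ε*(b-a)/b = Δ := by
        simp only [hbdef, hΔdef]
        rw [div_eq_div_iff (by nlinarith) (by positivity)]
        ring
      rw [h14] at hdrop
      linarith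
    -- iterate the drop
    set S : ℕ → ℝ := fun i => Nat.rec (motive := fun _ => ℝ) (F 1) (fun _ s => F ((1+δ)*s)) i with hSdef
    have hS0 : S 0 = F 1 := rfl
    have hSsucc : ∀ i, S (i+1) = F ((1+δ)*S i) := fun i => rfl
    have hS1 : ∀ i, 1 ≤ S i := by
      intro i
      induction i with
      | zero => rw [hS0]; exact hF1 1
      | succ i ih =>
          rw [hSsucc]
          calc (1:ℝ) ≤ S i := ih
            _ ≤ (1+δ)*S i := by nlinarith
            _ ≤ F ((1+δ)*S i) := hF1 _
    have hSφ : ∀ i, ε ≤ φ (g (S i)) := by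
      intro i
      have habs : ∀ x : ℝ, ε ≤ dist (φ (g (F x))) 0 → ε ≤ φ (g (F x)) ∨ F x ≤ 0 := by
        intro x hx
        rcases le_or_gt (F x) 0 with h | h
        · exact Or.inr h
        · left
          rw [Real.dist_eq, sub_zero, abs_of_nonneg (hφnn _ h)] at hx
          exact hx
      cases i with
      | zero =>
          rcases habs 1 (hF2 1) with h | h
          · rw [hS0]; exact h
          · exfalso; have := hF1 1; linarith
      | succ i =>
          have h1 : (0:ℝ) < (1+δ)*S i := by nlinarith [hS1 i]
          rcases habs ((1+δ)*S i) (hF2 _) with h | h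
          · rw [hSsucc]; exact h
          · exfalso; have := hF1 ((1+δ)*S i); linarith
    have hSmono : ∀ i, (1+δ)*S i ≤ S (i+1) := by
      intro i; rw [hSsucc]; exact hF1 _
    have hdropseq : ∀ i : ℕ, V (S i) ≤ V (S 0) - i*Δ := by
      intro i
      induction i with
      | zero => simp
      | succ i ih =>
          have h1 : V ((1+δ)*S i) ≤ V (S i) - Δ := hstep (S i) (hS1 i) (hSφ i)
          have h2 : V (S (i+1)) ≤ V ((1+δ)*S i) := by
            apply hVanti
            · exact mem_Ioi.mpr (by nlinarith [hS1 i])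
            · exact mem_Ioi.mpr (by linarith [hS1 (i+1)])
            · exact hSmono i
          push_cast
          push_cast at ih
          linarith
    obtain ⟨m, hm⟩ := exists_nat_gt ((V (S 0) + k/3)/Δ)
    have h1 := hdropseq m
    have h2 := hVlb (S m) (by linarith [hS1 m])
    rw [div_lt_iff₀ hΔ0] at hm
    set x1 : ℝ := V (S 0) with hx1
    set x2 : ℝ := V (S m) with hx2
    set x3 : ℝ := (m:ℝ)*Δ with hx3
    have t1 : x2 ≤ x1 - x3 := h1
    have t2 : x1 + k/3 < x3 := hm
    have t3 : -(k/3) ≤ x2 := h2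
    clear_value x1 x2 x3
    clear hx1 hx2 hx3 h1 h2 hm hdropseq
    linarith [t1, t2, t3]
  -- dichotomy: eventually g < 1/2 or eventually g > 1/2
  have hev16 : ∀ᶠ ρ in atTop, φ (g ρ) < 1/16 :=
    hφ0 (Iio_mem_nhds (by norm_num : (0:ℝ) < 1/16))
  have hdich : (∀ᶠ ρ in atTop, g ρ < 1/2) ∨ (∀ᶠ ρ in atTop, 1/2 < g ρ) := by
    by_contra hcon
    push_neg at hcon
    obtain ⟨h1, h2⟩ := hcon
    -- find a point ≥ R where g = 1/2
    obtain ⟨R, hR⟩ := eventually_atTop.mp (hev16.and (eventually_ge_atTop 1))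
    obtain ⟨a, ha1, ha2⟩ := (h1.and_eventually (eventually_ge_atTop R)).exists
    obtain ⟨b, hb1, hb2⟩ := (h2.and_eventually (eventually_ge_atTop R)).exists
    have hR1 : (1:ℝ) ≤ R := (hR R le_rfl).2
    have hgcont : ContinuousOn g (uIcc a b) := by
      intro x hx
      have hx1 : min a b ≤ x := by
        rw [uIcc] at hx; exact hx.1
      have hx0 : (0:ℝ) < x := by
        rcases le_total a b with h | h
        · rw [min_eq_left h] at hx1; linarith
        · rw [min_eq_right h] at hx1; linarith
      exact (hgd x hx0).continuousAt.continuousWithinAt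
    have hmem : (1/2 : ℝ) ∈ uIcc (g a) (g b) := by
      rw [mem_uIcc]
      right
      exact ⟨hb1, ha1⟩
    obtain ⟨c, hc1, hc2⟩ := intermediate_value_uIcc hgcont hmem
    have hcR : R ≤ c := by
      have hx1 : min a b ≤ c := by rw [uIcc] at hc1; exact hc1.1
      rcases le_total a b with h | h
      · rw [min_eq_left h] at hx1; linarith
      · rw [min_eq_right h] at hx1; linarith
    have hφc := (hR c hcR).1
    rw [hc2] at hφc
    simp only [hφdef] at hφc
    nlinarith
  -- convert smallness of φ(g) to convergence, in each branch
  rcases hdich with hsmall | hbig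
  · -- g < 1/2 eventually : then g → 0, excluded by the Lyapunov function
    exfalso
    have hgto0 : Tendsto g atTop (𝓝 0) := by
      rw [tendsto_iff_norm_sub_tendsto_zero]
      apply squeeze_zero'
        (g := fun ρ => Real.sqrt (4 * φ (g ρ)))
      · filter_upwards with ρ using norm_nonneg _
      · filter_upwards [hsmall, eventually_ge_atTop 1] with ρ hs h1
        have hρ0 : (0:ℝ) < ρ := by linarith
        have hg0' := hg0 ρ hρ0
        have key : (g ρ - 0)^2 ≤ 4 * φ (g ρ) := by
          simp only [hφdef, sub_zero]
          have e1 : (1:ℝ)/4 ≤ (g ρ - 1)^2 := by nlinarith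
          have e2 : g ρ ≤ g ρ + k - 1 := by linarith
          have e3 : (g ρ)^2 ≤ 4*(g ρ*(g ρ - 1)^2*(g ρ)) := by
            nlinarith [mul_le_mul_of_nonneg_left e1 (by positivity : (0:ℝ) ≤ 4*(g ρ)^2)]
          have e4 : 4*(g ρ*(g ρ - 1)^2*(g ρ)) ≤ 4*(g ρ*(g ρ - 1)^2*(g ρ + k - 1)) := by
            have e5 : (0:ℝ) ≤ 4*(g ρ*(g ρ - 1)^2) := by positivity
            nlinarith [mul_le_mul_of_nonneg_left e2 e5]
          nlinarith
        rw [Real.norm_eq_abs, ← Real.sqrt_sq_eq_abs]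
        exact Real.sqrt_le_sqrt key
      · have h4 : Tendsto (fun ρ => 4 * φ (g ρ)) atTop (𝓝 (4 * 0)) := hφ0.const_mul 4
        rw [mul_zero] at h4
        have h5 := (Real.continuous_sqrt.tendsto 0).comp h4
        rw [Real.sqrt_zero] at h5
        exact h5
    have hqto0 : Tendsto q atTop (𝓝 0) := hqlim0 hgto0
    -- V tends to (k-1)^2/2 at +∞ and at 0+
    have hVinf : Tendsto V atTop (𝓝 ((k-1)^2/2)) := by
      have hP : Tendsto P atTop (𝓝 (k*0 + 0 + 0^2 - (k-1))) :=
        (((hgto0.const_mul k).add hqto0).add (hgto0.pow 2)).sub_const (k-1)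
      have hV : Tendsto V atTop
          (𝓝 ((k*0 + 0 + 0^2 - (k-1))^2/2 + (k/3)*(2*0^3 - 3*0^2))) :=
        ((hP.pow 2).div_const 2).add
          ((((hgto0.pow 3).const_mul 2).sub ((hgto0.pow 2).const_mul 3)).const_mul (k/3))
      convert hV using 2
      ring
    have hV0 : Tendsto V (𝓝[>] (0:ℝ)) (𝓝 ((k-1)^2/2)) := by
      have hP : Tendsto P (𝓝[>] (0:ℝ)) (𝓝 (k*0 + 0 + 0^2 - (k-1))) :=
        (((hg00.const_mul k).add hq00).add (hg00.pow 2)).sub_const (k-1)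
      have hV : Tendsto V (𝓝[>] (0:ℝ))
          (𝓝 ((k*0 + 0 + 0^2 - (k-1))^2/2 + (k/3)*(2*0^3 - 3*0^2))) :=
        ((hP.pow 2).div_const 2).add
          ((((hg00.pow 3).const_mul 2).sub ((hg00.pow 2).const_mul 3)).const_mul (k/3))
      convert hV using 2
      ring
    -- V is constant on (0,∞)
    have hVconst : ∀ ρ : ℝ, 0 < ρ → V ρ = (k-1)^2/2 := by
      intro ρ hρ
      have hle : V ρ ≤ (k-1)^2/2 := by
        apply ge_of_tendsto hV0
        filter_upwards [Ioo_mem_nhdsGT_of_mem (Set.left_mem_Ico.mpr hρ)] with a haa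
        exact hVanti (mem_Ioi.mpr haa.1) (mem_Ioi.mpr hρ) haa.2.le
      have hge : (k-1)^2/2 ≤ V ρ := by
        apply le_of_tendsto hVinf
        filter_upwards [eventually_ge_atTop ρ] with b hb
        exact hVanti (mem_Ioi.mpr hρ) (mem_Ioi.mpr (lt_of_lt_of_le hρ hb)) hb
      linarith
    -- but V strictly drops somewhere since g < 1/2 at a large point
    obtain ⟨ρ₁, hρ₁g, hρ₁1⟩ := (hsmall.and (eventually_ge_atTop 1)).exists
    have hρ₁0 : (0:ℝ) < ρ₁ := by linarith
    have hc₀ : 0 < φ (g ρ₁) := by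
      have h1 := hg0 ρ₁ hρ₁0
      simp only [hφdef]
      have h2 : (0:ℝ) < (g ρ₁ - 1)^2 := by nlinarith
      have h3 : (0:ℝ) < g ρ₁ + k - 1 := by linarith
      exact mul_pos (mul_pos h1 h2) h3
    set c₀ : ℝ := φ (g ρ₁) with hc₀def
    have hψcont : ContinuousAt (fun ρ => φ (g ρ)) ρ₁ := by
      have hgc : ContinuousAt g ρ₁ := (hgd ρ₁ hρ₁0).continuousAt
      simp only [hφdef]
      exact (hgc.mul (((hgc.sub continuousAt_const).pow 2))).mul
        ((hgc.add continuousAt_const).sub continuousAt_const)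
    have hev : ∀ᶠ x in 𝓝 ρ₁, c₀/2 < φ (g x) :=
      hψcont (Ioi_mem_nhds (by linarith : c₀/2 < c₀))
    obtain ⟨η, hη0, hη⟩ := Metric.eventually_nhds_iff.mp hev
    set b : ℝ := ρ₁ + η/2 with hbdef
    have hρb : ρ₁ ≤ b := by simp only [hbdef]; linarith
    have hdrop := drop_lemma (V := V) (V' := fun ρ => -(2*k*φ (g ρ))/ρ) hρ₁0 hρb
      (by positivity : (0:ℝ) ≤ k*c₀)
      (fun ρ hρ => hVd ρ (lt_of_lt_of_le hρ₁0 hρ.1))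
      (fun ρ hρ => by
        have hρ0 : (0:ℝ) < ρ := lt_of_lt_of_le hρ₁0 hρ.1
        have h12 : c₀/2 < φ (g ρ) := by
          apply hη
          rw [Real.dist_eq, abs_of_nonneg (by linarith [hρ.1] : (0:ℝ) ≤ ρ - ρ₁)]
          have := hρ.2
          simp only [hbdef] at this
          linarith
        have h13 : -(2*k*φ (g ρ)) ≤ -(k*c₀) := by nlinarith
        exact div_le_div_of_nonneg_right h13 (le_of_lt hρ0))
    have hVb := hVconst b (by linarith)
    have hVρ₁ := hVconst ρ₁ hρ₁0
    have hpos : 0 < k*c₀*(b-ρ₁)/b := by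
      apply div_pos _ (by linarith)
      apply mul_pos (by positivity)
      simp only [hbdef]; linarith
    rw [hVb, hVρ₁] at hdrop
    linarith
  · -- g > 1/2 eventually : g → 1
    rw [tendsto_iff_norm_sub_tendsto_zero]
    apply squeeze_zero'
      (g := fun ρ => Real.sqrt (4 * φ (g ρ)))
    · filter_upwards with ρ using norm_nonneg _
    · filter_upwards [hbig, eventually_ge_atTop 1] with ρ hs h1
      have hρ0 : (0:ℝ) < ρ := by linarith
      have hg2' := hg2 ρ hρ0
      have key : (g ρ - 1)^2 ≤ 4 * φ (g ρ) := by
        simp only [hφdef]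
        have e1 : (1:ℝ) ≤ 4*(g ρ)*(g ρ + k - 1) := by nlinarith
        nlinarith [mul_le_mul_of_nonneg_left e1 (sq_nonneg (g ρ - 1))]
      rw [Real.norm_eq_abs, ← Real.sqrt_sq_eq_abs]
      exact Real.sqrt_le_sqrt key
    · have h4 : Tendsto (fun ρ => 4 * φ (g ρ)) atTop (𝓝 (4 * 0)) := hφ0.const_mul 4
      rw [mul_zero] at h4
      have h5 := (Real.continuous_sqrt.tendsto 0).comp h4
      rw [Real.sqrt_zero] at h5
      exact h5

/-- `w` (with derivative `w'` and second derivative `w''`) is a C² solution on `[0,∞)` of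
the limit ODE `w'' + ((n+1)/ρ)·w' + 2n·w² + 2ρ·w·w' = 0` (for `ρ > 0`)
with `w 0 = 1`, `w' 0 = 0`. -/
def IsLimitSol (n : ℕ) (w w' w'' : ℝ → ℝ) : Prop :=
  (∀ ρ ∈ Set.Ici (0:ℝ), HasDerivWithinAt w (w' ρ) (Set.Ici 0) ρ) ∧
  (∀ ρ ∈ Set.Ici (0:ℝ), HasDerivWithinAt w' (w'' ρ) (Set.Ici 0) ρ) ∧
  ContinuousOn w'' (Set.Ici 0) ∧
  (∀ ρ : ℝ, 0 < ρ →
    w'' ρ + (((n : ℝ) + 1) / ρ) * w' ρ + 2 * (n : ℝ) * (w ρ) ^ 2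
      + 2 * ρ * w ρ * w' ρ = 0) ∧
  w 0 = 1 ∧ w' 0 = 0

theorem stmt11 (n : ℕ) (hn : 3 ≤ n) (w w' w'' : ℝ → ℝ)
    (hsol : IsLimitSol n w w' w'')
    (hpos : ∀ ρ : ℝ, 0 ≤ ρ → 0 < w ρ ∧ ρ ^ 2 * w ρ ≤ 2)
    (hbdd : ∃ M : ℝ, ∀ ρ : ℝ, 0 ≤ ρ → ρ ^ 3 * |w' ρ| ≤ M) :
    Tendsto (fun ρ : ℝ => ρ ^ 2 * w ρ) atTop (nhds 1) ∧
    Tendsto (fun ρ : ℝ => ρ ^ 3 * w' ρ) atTop (nhds (-2)) := by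
  obtain ⟨j, rfl⟩ : ∃ j, n = j + 3 := ⟨n - 3, by omega⟩
  obtain ⟨hd1, hd2, hcont2, hode, hw0, hw'0⟩ := hsol
  obtain ⟨M, hM⟩ := hbdd
  have hM0 : 0 ≤ M := le_trans (by positivity) (hM 1 zero_le_one)
  set k : ℝ := (j:ℝ) + 1 with hkdef
  have hk1 : (1:ℝ) ≤ k := by
    simp only [hkdef]
    have : (0:ℝ) ≤ (j:ℝ) := Nat.cast_nonneg j
    linarith
  -- differentiability away from 0
  have hdw : ∀ ρ : ℝ, 0 < ρ → HasDerivAt w (w' ρ) ρ :=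
    fun ρ hρ => (hd1 ρ hρ.le).hasDerivAt (Ici_mem_nhds hρ)
  have hdw' : ∀ ρ : ℝ, 0 < ρ → HasDerivAt w' (w'' ρ) ρ :=
    fun ρ hρ => (hd2 ρ hρ.le).hasDerivAt (Ici_mem_nhds hρ)
  have hwc : ContinuousOn w (Ici 0) := fun ρ hρ => (hd1 ρ hρ).continuousWithinAt
  have hw'c : ContinuousOn w' (Ici 0) := fun ρ hρ => (hd2 ρ hρ).continuousWithinAt
  set g : ℝ → ℝ := fun ρ => ρ ^ 2 * w ρ with hgdef
  set q : ℝ → ℝ := fun ρ => ρ ^ 3 * w' ρ with hqdef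
  -- basic bounds
  have hg0 : ∀ ρ : ℝ, 0 < ρ → 0 < g ρ := by
    intro ρ hρ
    exact mul_pos (by positivity) (hpos ρ hρ.le).1
  have hg2 : ∀ ρ : ℝ, 0 < ρ → g ρ ≤ 2 := fun ρ hρ => (hpos ρ hρ.le).2
  have hgnn : ∀ ρ : ℝ, 0 ≤ ρ → 0 ≤ g ρ := by
    intro ρ hρ
    exact mul_nonneg (by positivity) (hpos ρ hρ).1.le
  have hg2' : ∀ ρ : ℝ, 0 ≤ ρ → g ρ ≤ 2 := fun ρ hρ => (hpos ρ hρ).2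
  have hqM : ∀ ρ : ℝ, 0 < ρ → |q ρ| ≤ M := by
    intro ρ hρ
    have h1 : |q ρ| = ρ ^ 3 * |w' ρ| := by
      simp only [hqdef]
      rw [abs_mul, abs_of_nonneg (by positivity : (0:ℝ) ≤ ρ^3)]
    rw [h1]
    exact hM ρ hρ.le
  -- derivatives of g and q
  have hgd : ∀ ρ : ℝ, 0 < ρ → HasDerivAt g ((2*g ρ + q ρ)/ρ) ρ := by
    intro ρ hρ
    have hρ0 : ρ ≠ 0 := ne_of_gt hρ
    have h1 := (hasDerivAt_pow 2 ρ).mul (hdw ρ hρ)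
    refine h1.congr_deriv ?_
    simp only [hgdef, hqdef]
    push_cast
    field_simp
  have hqd : ∀ ρ : ℝ, 0 < ρ →
      HasDerivAt q ((-(k*q ρ) - 2*(k+2)*(g ρ)^2 - 2*g ρ*q ρ)/ρ) ρ := by
    intro ρ hρ
    have hρ0 : ρ ≠ 0 := ne_of_gt hρ
    have h1 := (hasDerivAt_pow 3 ρ).mul (hdw' ρ hρ)
    refine h1.congr_deriv ?_
    have e := hode ρ hρ
    have hcast : ((j + 3 : ℕ) : ℝ) = (j:ℝ) + 3 := by push_cast; ring
    rw [hcast] at e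
    have hw2 : w'' ρ = -((((j:ℝ)+3) + 1) / ρ * w' ρ) - 2*((j:ℝ)+3)*(w ρ)^2
        - 2*ρ*w ρ*w' ρ := by linarith
    rw [hw2]
    simp only [hgdef, hqdef, hkdef]
    push_cast
    field_simp
    ring
  -- limits at 0+
  have hw1 : Tendsto w (𝓝[>] (0:ℝ)) (𝓝 1) := by
    have h1 : Tendsto w (𝓝[Ici 0] (0:ℝ)) (𝓝 (w 0)) := (hd1 0 self_mem_Ici).continuousWithinAt
    rw [hw0] at h1
    exact h1.mono_left (nhdsWithin_mono _ Ioi_subset_Ici_self)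
  have hw'1 : Tendsto w' (𝓝[>] (0:ℝ)) (𝓝 0) := by
    have h1 : Tendsto w' (𝓝[Ici 0] (0:ℝ)) (𝓝 (w' 0)) := (hd2 0 self_mem_Ici).continuousWithinAt
    rw [hw'0] at h1
    exact h1.mono_left (nhdsWithin_mono _ Ioi_subset_Ici_self)
  have hpow0 : ∀ m : ℕ, Tendsto (fun ρ : ℝ => ρ ^ m) (𝓝[>] (0:ℝ)) (𝓝 (0 ^ m)) :=
    fun m => ((continuous_pow m).tendsto 0).mono_left nhdsWithin_le_nhds
  have hg00 : Tendsto g (𝓝[>] (0:ℝ)) (𝓝 0) := by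
    have := (hpow0 2).mul hw1
    simpa using this
  have hq00 : Tendsto q (𝓝[>] (0:ℝ)) (𝓝 0) := by
    have := (hpow0 3).mul hw'1
    simpa using this
  -- the integral identity
  set J : ℝ → ℝ := fun ρ => ∫ t in (0:ℝ)..ρ, t ^ j * (t ^ 2 * w t)^2 with hJdef
  have hintg : ContinuousOn (fun t : ℝ => t ^ j * (t ^ 2 * w t)^2) (Ici 0) := by
    apply (continuousOn_pow j).mul
    exact ((continuousOn_pow 2).mul hwc).pow 2
  have hJint : ∀ b : ℝ, 0 ≤ b →
      IntervalIntegrable (fun t : ℝ => t ^ j * (t ^ 2 * w t)^2) MeasureTheory.volume 0 b := by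
    intro b hb
    apply (hintg.mono _).intervalIntegrable
    rw [uIcc_of_le hb]
    exact fun t ht => ht.1
  have hJd : ∀ ρ : ℝ, 0 < ρ → HasDerivAt J (ρ ^ j * (ρ ^ 2 * w ρ)^2) ρ := by
    intro ρ hρ
    apply intervalIntegral.integral_hasDerivAt_right (hJint ρ hρ.le)
    · apply ContinuousOn.stronglyMeasurableAtFilter isOpen_Ioi _ _ hρ
      apply hintg.mono
      exact fun t (ht : t ∈ Ioi (0:ℝ)) => mem_Ici.mpr (le_of_lt ht)
    · have h1 : ContinuousAt w ρ := (hdw ρ hρ).continuousAt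
      exact (continuousAt_pow _ _).mul (((continuousAt_pow _ _).mul h1).pow 2)
  set Φ : ℝ → ℝ := fun ρ => ρ ^ (j+4) * w' ρ + ρ ^ (j+5) * (w ρ)^2 + k * J ρ with hΦdef
  have hΦd : ∀ ρ : ℝ, 0 < ρ → HasDerivAt Φ 0 ρ := by
    intro ρ hρ
    have hρ0 : ρ ≠ 0 := ne_of_gt hρ
    have h1 := (hasDerivAt_pow (j+4) ρ).mul (hdw' ρ hρ)
    have h2 := (hasDerivAt_pow (j+5) ρ).mul ((hdw ρ hρ).pow 2)
    have h3 := (hJd ρ hρ).const_mul k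
    have h4 := (h1.add h2).add h3
    refine h4.congr_deriv ?_
    have e := hode ρ hρ
    have hcast : ((j + 3 : ℕ) : ℝ) = (j:ℝ) + 3 := by push_cast; ring
    rw [hcast] at e
    have hw2 : w'' ρ = -((((j:ℝ)+3) + 1) / ρ * w' ρ) - 2*((j:ℝ)+3)*(w ρ)^2
        - 2*ρ*w ρ*w' ρ := by linarith
    rw [hw2]
    simp only [hkdef, Pi.pow_apply]
    push_cast
    field_simp
    ring
  have hΦ00 : Tendsto Φ (𝓝[>] (0:ℝ)) (𝓝 0) := by
    have hJ0 : Tendsto J (𝓝[>] (0:ℝ)) (𝓝 0) := by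
      have hbound : ∀ᶠ ρ in 𝓝[>] (0:ℝ), ‖J ρ‖ ≤ 4 * ρ := by
        filter_upwards [Ioo_mem_nhdsGT_of_mem (left_mem_Ico.mpr zero_lt_one)] with ρ hρ
        have hρ0 : (0:ℝ) < ρ := hρ.1
        rw [Real.norm_eq_abs, hJdef]
        have hb := intervalIntegral.norm_integral_le_of_norm_le_const
          (C := 4) (f := fun t : ℝ => t ^ j * (t ^ 2 * w t)^2) (a := 0) (b := ρ) ?_
        · rw [Real.norm_eq_abs] at hb
          calc |∫ t in (0:ℝ)..ρ, t ^ j * (t ^ 2 * w t)^2| ≤ 4 * |ρ - 0| := hb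
            _ = 4 * ρ := by rw [sub_zero, abs_of_pos hρ0]
        · intro t ht
          rw [uIoc_of_le hρ0.le] at ht
          have ht0 : 0 < t := ht.1
          have ht1 : t ≤ 1 := le_trans ht.2 hρ.2.le
          rw [Real.norm_eq_abs, abs_mul]
          have hb1 : |t ^ j| ≤ 1 := by
            rw [abs_pow, abs_of_pos ht0]
            exact pow_le_one₀ ht0.le ht1
          have hb2 : |(t^2*w t)^2| ≤ 4 := by
            rw [abs_pow]
            have h5 : |t^2*w t| ≤ 2 := by
              rw [abs_of_nonneg (hgnn t ht0.le)]
              exact hg2' t ht0.le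
            calc |t^2*w t|^2 ≤ 2^2 := by
                  apply pow_le_pow_left₀ (abs_nonneg _) h5
              _ = 4 := by norm_num
          calc |t ^ j| * |(t^2*w t)^2| ≤ 1 * 4 :=
                mul_le_mul hb1 hb2 (abs_nonneg _) zero_le_one
            _ = 4 := by norm_num
      have htend : Tendsto (fun ρ : ℝ => 4 * ρ) (𝓝[>] (0:ℝ)) (𝓝 0) := by
        have h6 : Tendsto (fun ρ : ℝ => 4 * ρ) (𝓝 (0:ℝ)) (𝓝 (4 * 0)) :=
          (continuous_const.mul continuous_id).tendsto 0
        rw [mul_zero] at h6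
        exact h6.mono_left nhdsWithin_le_nhds
      exact squeeze_zero_norm' hbound htend
    have h1 := ((hpow0 (j+4)).mul hw'1).add (((hpow0 (j+5)).mul (hw1.pow 2)).add (hJ0.const_mul k))
    simp only [zero_pow (Nat.succ_ne_zero _), zero_mul, mul_zero, add_zero, zero_add] at h1
    have h2 : Φ = fun ρ => ρ ^ (j+4) * w' ρ + (ρ ^ (j+5) * (w ρ)^2 + k * J ρ) := by
      funext ρ; simp only [hΦdef]; ring
    rw [h2]
    exact h1
  have hΦ0 : ∀ ρ : ℝ, 0 < ρ → Φ ρ = 0 := by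
    intro ρ hρ
    have hkey : ∀ a : ℝ, 0 < a → a ≤ ρ → Φ ρ = Φ a := by
      intro a ha haρ
      have := constant_of_has_deriv_right_zero (f := Φ) (a := a) (b := ρ)
        (fun x hx => (hΦd x (lt_of_lt_of_le ha hx.1)).continuousAt.continuousWithinAt)
        (fun x hx => (hΦd x (lt_of_lt_of_le ha hx.1)).hasDerivWithinAt)
      exact this ρ (right_mem_Icc.mpr haρ)
    have h1 : (fun _ : ℝ => Φ ρ) =ᶠ[𝓝[>] (0:ℝ)] Φ := by
      filter_upwards [Ioo_mem_nhdsGT_of_mem (left_mem_Ico.mpr hρ)] with a ha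
      exact hkey a ha.1 ha.2.le
    have h2 : Tendsto Φ (𝓝[>] (0:ℝ)) (𝓝 (Φ ρ)) :=
      Tendsto.congr' h1 tendsto_const_nhds
    exact (tendsto_nhds_unique h2 hΦ00)
  have hid : ∀ ρ : ℝ, 0 < ρ →
      q ρ + (g ρ)^2 = -(((j:ℝ)+1) * J ρ / ρ ^ (j+1)) := by
    intro ρ hρ
    have hρ0 : ρ ≠ 0 := ne_of_gt hρ
    have h1 := hΦ0 ρ hρ
    simp only [hΦdef, hkdef] at h1
    simp only [hqdef, hgdef]
    rw [show -(((j:ℝ)+1) * J ρ / ρ^(j+1)) = (-(((j:ℝ)+1) * J ρ)) / ρ^(j+1) from by ring,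
      eq_div_iff (pow_ne_zero _ hρ0)]
    linear_combination h1
  -- Cesàro averaging
  have hcesaro : ∀ L : ℝ, Tendsto (fun ρ : ℝ => (ρ^2*w ρ)^2) atTop (𝓝 L) →
      Tendsto (fun ρ : ℝ => ((j:ℝ)+1) * J ρ / ρ ^ (j+1)) atTop (𝓝 L) := by
    intro L hL
    exact cesaro (((continuousOn_pow 2).mul hwc).pow 2)
      (C := 4) (fun t ht => by
        have h5 : |t^2*w t| ≤ 2 := by
          rw [abs_of_nonneg (hgnn t ht)]
          exact hg2' t ht
        show |(t^2*w t)^2| ≤ 4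
        rw [abs_pow]
        calc |t^2*w t|^2 ≤ 2^2 := pow_le_pow_left₀ (abs_nonneg _) h5 2
          _ = 4 := by norm_num) hL
  -- hypothesis for main_dyn : if g → 0 then q → 0
  have hqlim0 : Tendsto g atTop (𝓝 0) → Tendsto q atTop (𝓝 0) := by
    intro hgz
    have hsq : Tendsto (fun ρ : ℝ => (ρ^2*w ρ)^2) atTop (𝓝 0) := by
      have h7 := hgz.pow 2
      have h8 : ((0:ℝ)^2 : ℝ) = 0 := by norm_num
      rw [h8] at h7
      exact h7
    have hA := hcesaro 0 hsq
    have hR : Tendsto (fun ρ : ℝ => -((ρ^2*w ρ)^2 + ((j:ℝ)+1) * J ρ / ρ ^ (j+1)))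
        atTop (𝓝 0) := by
      have h7 := (hsq.add hA).neg
      have h8 : (-((0:ℝ)+0) : ℝ) = 0 := by norm_num
      rw [h8] at h7
      exact h7
    apply hR.congr'
    filter_upwards [eventually_gt_atTop 0] with ρ hρ
    have := hid ρ hρ
    simp only [hqdef, hgdef] at this ⊢
    linarith
  -- the main dynamical result
  have hmain : Tendsto g atTop (𝓝 1) :=
    main_dyn hk1 hM0 hg0 hg2 hqM hgd hqd hg00 hq00 hqlim0
  constructor
  · exact hmain
  · have hsq : Tendsto (fun ρ : ℝ => (ρ^2*w ρ)^2) atTop (𝓝 1) := by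
      have := hmain.pow 2
      norm_num at this
      exact this
    have hA := hcesaro 1 hsq
    have hR : Tendsto (fun ρ : ℝ => -((ρ^2*w ρ)^2 + ((j:ℝ)+1) * J ρ / ρ ^ (j+1)))
        atTop (𝓝 (-2)) := by
      have h7 := (hsq.add hA).neg
      have h8 : (-((1:ℝ)+1) : ℝ) = -2 := by norm_num
      rw [h8] at h7
      exact h7
    apply hR.congr'
    filter_upwards [eventually_gt_atTop 0] with ρ hρ
    have := hid ρ hρ
    simp only [hqdef, hgdef] at this ⊢
    linarith

end
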